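/- Suppose the dataset satisfies ε–double–non-separation for some ε > 0: for every (v, w) with ‖v‖² + ‖w‖² = 1, either there exists i with yᵢ = 1 and vᵀxᵢ + wᵀzᵢ ≤ -ε, or there exists i with yᵢ = 0 and min(vᵀxᵢ, wᵀzᵢ) ≥ ε. Then for all unit directions (v, w) and all t ≥ 0, L(tv, tw) ≤ log 2 - εt, where L is the zero-inflated logistic log-likelihood; consequently sup over unit (v,w) of L(tv, tw) tends to -∞ as t → ∞. -/

import Mathlib

noncomputable def F (μ : ℝ) : ℝ := Real.exp μ / (1 + Real.exp μ)

noncomputable def L {n d p : ℕ} (y : Fin n → ℝ) (x : Fin n → Fin d → ℝ)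
    (z : Fin n → Fin p → ℝ) (β : Fin d → ℝ) (γ : Fin p → ℝ) : ℝ :=
  ∑ i, (y i * Real.log (F (∑ l, γ l * z i l) * F (∑ l, β l * x i l))
    + (1 - y i) * Real.log (1 - F (∑ l, γ l * z i l) * F (∑ l, β l * x i l)))

/-!
Each observation contributes a non-positive term to `L`, so `L` is bounded by the term of any
single observation. Non-separation in the direction `(v, w)` supplies an observation whose term
along the ray `t • (v, w)` is at most `log 2 - ε t`: for `yᵢ = 1` by `F a F b ≤ exp (a + b)`, and
for `yᵢ = 0` by `1 - F a F b ≤ exp (-a) + exp (-b)`.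
-/

open Real

noncomputable def bernoulliLogLik (y p : ℝ) : ℝ :=
  y * log p + (1 - y) * log (1 - p)

lemma L_eq_sum_bernoulliLogLik {n d p : ℕ} (y : Fin n → ℝ) (x : Fin n → Fin d → ℝ)
    (z : Fin n → Fin p → ℝ) (β : Fin d → ℝ) (γ : Fin p → ℝ) :
    L y x z β γ =
      ∑ i, bernoulliLogLik (y i) (F (∑ l, γ l * z i l) * F (∑ l, β l * x i l)) :=
  rfl

lemma bernoulliLogLik_nonpos {y p : ℝ} (hy : y = 0 ∨ y = 1) (hp₀ : 0 ≤ p) (hp₁ : p ≤ 1) :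
    bernoulliLogLik y p ≤ 0 := by
  rcases hy with rfl | rfl
  · simpa [bernoulliLogLik] using log_nonpos (by linarith) (by linarith)
  · simpa [bernoulliLogLik] using log_nonpos hp₀ hp₁

lemma F_pos (a : ℝ) : 0 < F a := by unfold F; positivity

lemma F_lt_one (a : ℝ) : F a < 1 := by
  unfold F
  rw [div_lt_one (by positivity)]
  linarith

lemma F_le_exp (a : ℝ) : F a ≤ exp a :=
  div_le_self (exp_pos a).le (by linarith [exp_pos a])

lemma one_sub_F_eq (a : ℝ) : 1 - F a = (1 + exp a)⁻¹ := by
  unfold F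
  field_simp
  ring

lemma one_sub_F_le_exp_neg (a : ℝ) : 1 - F a ≤ exp (-a) := by
  rw [one_sub_F_eq, exp_neg]
  exact inv_anti₀ (exp_pos a) (by linarith)

lemma F_mul_F_pos (a b : ℝ) : 0 < F a * F b := mul_pos (F_pos a) (F_pos b)

lemma F_mul_F_lt_one (a b : ℝ) : F a * F b < 1 :=
  mul_lt_one_of_nonneg_of_lt_one_left (F_pos a).le (F_lt_one a) (F_lt_one b).le

lemma F_mul_F_le_exp_add (a b : ℝ) : F a * F b ≤ exp (a + b) := by
  rw [exp_add]
  exact mul_le_mul (F_le_exp a) (F_le_exp b) (F_pos b).le (exp_pos a).le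

/-- `1 - F a F b = (1 - F a) + F a (1 - F b)` with `F a ≤ 1`. -/
lemma one_sub_F_mul_F_le (a b : ℝ) : 1 - F a * F b ≤ exp (-a) + exp (-b) := by
  have ha := one_sub_F_le_exp_neg a
  have hb := one_sub_F_le_exp_neg b
  nlinarith [F_pos a, F_lt_one a, F_lt_one b]

lemma bernoulliLogLik_one_F_mul_F_le {a b s : ℝ} (h : a + b ≤ -s) :
    bernoulliLogLik 1 (F a * F b) ≤ -s := by
  have hlog : log (F a * F b) ≤ a + b := by
    rw [← log_exp (a + b)]
    exact log_le_log (F_mul_F_pos a b) (F_mul_F_le_exp_add a b)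
  simp only [bernoulliLogLik, one_mul, sub_self, zero_mul, add_zero]
  linarith

lemma bernoulliLogLik_zero_F_mul_F_le {a b s : ℝ} (ha : s ≤ a) (hb : s ≤ b) :
    bernoulliLogLik 0 (F a * F b) ≤ log 2 - s := by
  have hbound : 1 - F a * F b ≤ 2 * exp (-s) := by
    have := one_sub_F_mul_F_le a b
    have := exp_le_exp.2 (neg_le_neg ha)
    have := exp_le_exp.2 (neg_le_neg hb)
    linarith
  have hpos : 0 < 1 - F a * F b := sub_pos.2 (F_mul_F_lt_one a b)
  calc bernoulliLogLik 0 (F a * F b) = log (1 - F a * F b) := by simp [bernoulliLogLik]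
    _ ≤ log (2 * exp (-s)) := log_le_log hpos hbound
    _ = log 2 - s := by rw [log_mul two_ne_zero (exp_ne_zero _), log_exp]; ring

lemma sum_le_of_nonpos {ι : Type*} [Fintype ι] {f : ι → ℝ} (hf : ∀ j, f j ≤ 0) (i : ι) :
    ∑ j, f j ≤ f i := by
  simpa using Finset.single_le_sum (f := fun j ↦ -f j) (fun j _ ↦ neg_nonneg.2 (hf j))
    (Finset.mem_univ i)

lemma sum_smul_mul {m : ℕ} (t : ℝ) (v u : Fin m → ℝ) :
    ∑ l, (t • v) l * u l = t * ∑ l, v l * u l :=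
  smul_dotProduct t v u

theorem loglik_coercive_bound {n d q : ℕ}
    (y : Fin n → ℝ) (x : Fin n → Fin d → ℝ) (z : Fin n → Fin q → ℝ)
    (hy : ∀ i, y i = 0 ∨ y i = 1) (ε : ℝ) (hε : 0 < ε)
    (hnonsep : ∀ (v : Fin d → ℝ) (w : Fin q → ℝ),
      (∑ l, (v l) ^ 2) + (∑ l, (w l) ^ 2) = 1 →
      (∃ i, y i = 1 ∧ (∑ l, v l * x i l) + (∑ l, w l * z i l) ≤ -ε) ∨
      (∃ i, y i = 0 ∧ ε ≤ min (∑ l, v l * x i l) (∑ l, w l * z i l))) :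
    (∀ (v : Fin d → ℝ) (w : Fin q → ℝ),
      (∑ l, (v l) ^ 2) + (∑ l, (w l) ^ 2) = 1 →
      ∀ t : ℝ, 0 ≤ t → L y x z (t • v) (t • w) ≤ Real.log 2 - ε * t) ∧
    (∀ M : ℝ, ∃ T : ℝ, ∀ t ≥ T, ∀ (v : Fin d → ℝ) (w : Fin q → ℝ),
      (∑ l, (v l) ^ 2) + (∑ l, (w l) ^ 2) = 1 →
      L y x z (t • v) (t • w) ≤ M) := by
  have ray_bound : ∀ (v : Fin d → ℝ) (w : Fin q → ℝ),
      (∑ l, (v l) ^ 2) + (∑ l, (w l) ^ 2) = 1 →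
      ∀ t : ℝ, 0 ≤ t → L y x z (t • v) (t • w) ≤ log 2 - ε * t := by
    intro v w hvw t ht
    simp only [L_eq_sum_bernoulliLogLik, sum_smul_mul]
    have hterm (i : Fin n) :
        bernoulliLogLik (y i) (F (t * ∑ l, w l * z i l) * F (t * ∑ l, v l * x i l)) ≤ 0 :=
      bernoulliLogLik_nonpos (hy i) (F_mul_F_pos _ _).le (F_mul_F_lt_one _ _).le
    rcases hnonsep v w hvw with ⟨i, hyi, hi⟩ | ⟨i, hyi, hi⟩
    · refine (sum_le_of_nonpos hterm i).trans ?_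
      have hscaled := mul_le_mul_of_nonneg_left hi ht
      rw [hyi]
      linarith [bernoulliLogLik_one_F_mul_F_le (s := ε * t)
        (a := t * ∑ l, w l * z i l) (b := t * ∑ l, v l * x i l) (by linarith),
        log_nonneg one_le_two]
    · refine (sum_le_of_nonpos hterm i).trans ?_
      rw [hyi, mul_comm ε t]
      exact bernoulliLogLik_zero_F_mul_F_le
        (mul_le_mul_of_nonneg_left (hi.trans (min_le_right _ _)) ht)
        (mul_le_mul_of_nonneg_left (hi.trans (min_le_left _ _)) ht)
  refine ⟨ray_bound, fun M ↦ ⟨max 0 ((log 2 - M) / ε), fun t ht v w hvw ↦ ?_⟩⟩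
  have hM := (div_le_iff₀ hε).1 ((le_max_right _ _).trans ht)
  linarith [ray_bound v w hvw t ((le_max_left _ _).trans ht)]
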